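/- Let 0 < κ < 1 and Q_ρ(x) ⊆ Q_s(x) be concentric cubes with 0 < ρ ≤ s. Let f be measurable with finite κ-averages, and let q_ρ, q_s be minimizers of q ↦ (⨍_{Q_ρ(x)} |f − q|^κ)^{1/κ} and q ↦ (⨍_{Q_s(x)} |f − q|^κ)^{1/κ}, respectively. Then |q_ρ − q_s| ≤ C(κ) · (s/ρ)^{n/κ} · (⨍_{Q_s(x)} |f − q_s|^κ dy)^{1/κ} for a constant C(κ) depending only on κ. -/

import Mathlib

open MeasureTheory

/-- The open cube `x + (-t,t)^n` in `ℝⁿ`. -/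
def cube (n : ℕ) (x : Fin n → ℝ) (t : ℝ) : Set (Fin n → ℝ) :=
  {y | ∀ i, |y i - x i| < t}

/-!
Subadditivity of `t ↦ t ^ κ` for `κ ≤ 1` gives `|qρ - qs| ^ κ ≤ |f - qρ| ^ κ + |f - qs| ^ κ`
pointwise. Averaging over `Q_ρ` and using the minimality of `qρ` bounds `|qρ - qs| ^ κ` by
`2 ⨍_{Q_ρ} |f - qs| ^ κ`, and enlarging the domain of a nonnegative integrand to `Q_s` costs the
volume ratio `(s / ρ) ^ n`.
-/

lemma abs_sub_rpow_le {p : ℝ} (hp0 : 0 ≤ p) (hp1 : p ≤ 1) (a b c : ℝ) :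
    |a - c| ^ p ≤ |a - b| ^ p + |b - c| ^ p :=
  calc |a - c| ^ p ≤ (|a - b| + |b - c|) ^ p :=
        Real.rpow_le_rpow (abs_nonneg _) (abs_sub_le a b c) hp0
    _ ≤ |a - b| ^ p + |b - c| ^ p :=
        Real.rpow_add_le_add_rpow (abs_nonneg _) (abs_nonneg _) hp0 hp1

section SetAverage

variable {α : Type*} [MeasurableSpace α] {μ : Measure α} {s t : Set α} {f g : α → ℝ}

lemma setAverage_mono (hf : IntegrableOn f s μ) (hg : IntegrableOn g s μ) (h : f ≤ g) :
    ⨍ x in s, f x ∂μ ≤ ⨍ x in s, g x ∂μ := by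
  rw [setAverage_eq, setAverage_eq]
  exact smul_le_smul_of_nonneg_left (setIntegral_mono hf hg h) (inv_nonneg.2 measureReal_nonneg)

lemma setAverage_add (hf : IntegrableOn f s μ) (hg : IntegrableOn g s μ) :
    ⨍ x in s, f x + g x ∂μ = ⨍ x in s, f x ∂μ + ⨍ x in s, g x ∂μ := by
  simp only [setAverage_eq, integral_add hf hg, smul_add]

lemma setAverage_le_measureReal_div_mul_setAverage (hst : s ⊆ t) (ht : μ t ≠ ⊤)
    (hg : IntegrableOn g t μ) (hg0 : 0 ≤ᵐ[μ.restrict t] g) :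
    ⨍ x in s, g x ∂μ ≤ μ.real t / μ.real s * ⨍ x in t, g x ∂μ :=
  calc ⨍ x in s, g x ∂μ = (μ.real s)⁻¹ * ∫ x in s, g x ∂μ := setAverage_eq μ g s
    _ ≤ (μ.real s)⁻¹ * ∫ x in t, g x ∂μ :=
        mul_le_mul_of_nonneg_left (setIntegral_mono_set hg hg0 hst.eventuallyLE)
          (inv_nonneg.2 measureReal_nonneg)
    _ = μ.real t / μ.real s * ⨍ x in t, g x ∂μ := by
        rw [← measure_smul_setAverage g ht, smul_eq_mul]
        ring

lemma abs_sub_rpow_le_two_mul_setAverage {p : ℝ} (hp0 : 0 ≤ p) (hp1 : p ≤ 1)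
    (hs : μ s ≠ 0) (hst : s ⊆ t) (ht : μ t ≠ ⊤) {a b : ℝ}
    (ha : IntegrableOn (fun y => |f y - a| ^ p) t μ)
    (hb : IntegrableOn (fun y => |f y - b| ^ p) t μ)
    (hmin : ⨍ y in s, |f y - a| ^ p ∂μ ≤ ⨍ y in s, |f y - b| ^ p ∂μ) :
    |a - b| ^ p ≤ 2 * (μ.real t / μ.real s) * ⨍ y in t, |f y - b| ^ p ∂μ := by
  have hs_fin : μ s ≠ ⊤ := ne_top_of_le_ne_top ht (measure_mono hst)
  calc |a - b| ^ p = ⨍ _ in s, |a - b| ^ p ∂μ := (setAverage_const hs hs_fin _).symm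
    _ ≤ ⨍ y in s, |f y - a| ^ p + |f y - b| ^ p ∂μ := by
        refine setAverage_mono (integrableOn_const hs_fin) ((ha.mono_set hst).add
          (hb.mono_set hst)) fun y => ?_
        simpa only [abs_sub_comm a] using abs_sub_rpow_le hp0 hp1 a (f y) b
    _ = ⨍ y in s, |f y - a| ^ p ∂μ + ⨍ y in s, |f y - b| ^ p ∂μ :=
        setAverage_add (ha.mono_set hst) (hb.mono_set hst)
    _ ≤ 2 * ⨍ y in s, |f y - b| ^ p ∂μ := by linarith
    _ ≤ 2 * (μ.real t / μ.real s * ⨍ y in t, |f y - b| ^ p ∂μ) := by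
        gcongr
        exact setAverage_le_measureReal_div_mul_setAverage hst ht hb
          (ae_of_all _ fun y => by positivity)
    _ = 2 * (μ.real t / μ.real s) * ⨍ y in t, |f y - b| ^ p ∂μ := by ring

end SetAverage

section Cube

variable {n : ℕ} {x : Fin n → ℝ} {t : ℝ}

lemma cube_eq_ball (ht : 0 < t) : cube n x t = Metric.ball x t := by
  ext y
  simp only [cube, Set.mem_ofPred_eq, Metric.mem_ball, dist_pi_lt_iff ht, Real.dist_eq]

lemma cube_subset_cube {ρ s : ℝ} (h : ρ ≤ s) : cube n x ρ ⊆ cube n x s :=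
  fun _ hy i => (hy i).trans_le h

lemma volume_cube (ht : 0 < t) : volume (cube n x t) = ENNReal.ofReal ((2 * t) ^ n) := by
  rw [cube_eq_ball ht, Real.volume_pi_ball x ht, Fintype.card_fin]

lemma volume_real_cube (ht : 0 < t) : volume.real (cube n x t) = (2 * t) ^ n := by
  rw [measureReal_def, volume_cube ht, ENNReal.toReal_ofReal (by positivity)]

end Cube

theorem stmt7 (κ : ℝ) (hκ0 : 0 < κ) (hκ1 : κ < 1) :
    ∃ C > 0, ∀ (n : ℕ) (x : Fin n → ℝ) (ρ s : ℝ), 0 < ρ → ρ ≤ s →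
      ∀ (f : (Fin n → ℝ) → ℝ),
        (∀ q : ℝ, IntegrableOn (fun y => |f y - q| ^ κ) (cube n x s)) →
        ∀ qρ qs : ℝ,
          (∀ q : ℝ, (⨍ y in cube n x ρ, |f y - qρ| ^ κ) ^ (1 / κ) ≤
            (⨍ y in cube n x ρ, |f y - q| ^ κ) ^ (1 / κ)) →
          (∀ q : ℝ, (⨍ y in cube n x s, |f y - qs| ^ κ) ^ (1 / κ) ≤
            (⨍ y in cube n x s, |f y - q| ^ κ) ^ (1 / κ)) →
          |qρ - qs| ≤ C * (s / ρ) ^ ((n : ℝ) / κ) *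
            (⨍ y in cube n x s, |f y - qs| ^ κ) ^ (1 / κ) := by
  refine ⟨2 ^ (1 / κ), by positivity, fun n x ρ s hρ hρs f hint qρ qs hqρ _ => ?_⟩
  have hs : 0 < s := hρ.trans_le hρs
  have avg_nonneg : ∀ (t q : ℝ), 0 ≤ ⨍ y in cube n x t, |f y - q| ^ κ := fun t q => by
    rw [setAverage_eq]; positivity
  have hmin := (Real.rpow_le_rpow_iff (avg_nonneg ρ qρ) (avg_nonneg ρ qs) (by positivity)).1
    (hqρ qs)
  have hkey := abs_sub_rpow_le_two_mul_setAverage hκ0.le hκ1.le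
    (by simp [volume_cube hρ]; positivity) (cube_subset_cube hρs) (by simp [volume_cube hs])
    (hint qρ) (hint qs) hmin
  rw [volume_real_cube hs, volume_real_cube hρ, ← div_pow, mul_div_mul_left _ _ two_ne_zero,
    ← Real.rpow_natCast] at hkey
  have hsρ : 0 ≤ s / ρ := by positivity
  calc |qρ - qs| = (|qρ - qs| ^ κ) ^ (1 / κ) := by
        rw [← Real.rpow_mul (abs_nonneg _), mul_one_div_cancel hκ0.ne', Real.rpow_one]
    _ ≤ (2 * (s / ρ) ^ (n : ℝ) * ⨍ y in cube n x s, |f y - qs| ^ κ) ^ (1 / κ) := by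
        gcongr
    _ = 2 ^ (1 / κ) * (s / ρ) ^ ((n : ℝ) / κ) *
          (⨍ y in cube n x s, |f y - qs| ^ κ) ^ (1 / κ) := by
        rw [Real.mul_rpow (by positivity) (avg_nonneg s qs), Real.mul_rpow zero_le_two
          (Real.rpow_nonneg hsρ _), ← Real.rpow_mul hsρ, mul_one_div]
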